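/- Let γ1 > 0 and γ2 > 0, let α be as defined below, and suppose 0 < t ≤ α²/(2γ2·α² + 1) and that every GEN-ISTA iterate satisfies αI ⪯ Ω^{(k)}. Then every iterate satisfies Ω^{(k)} ⪯ b'I, where b' = ‖Ω*‖₂ + ‖Ω^{(0)} − Ω*‖_F and Ω* is the minimizer of the elastic-net objective. -/

import Mathlib

open Matrix BigOperators Kronecker

/-- Frobenius norm of a real matrix. -/
noncomputable def frobNorm {n : Type*} [Fintype n] (A : Matrix n n ℝ) : ℝ :=
  Real.sqrt (∑ i, ∑ j, (A i j)^2)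

/-- Entrywise L1 norm of a real matrix. -/
noncomputable def l1Norm {n : Type*} [Fintype n] (A : Matrix n n ℝ) : ℝ :=
  ∑ i, ∑ j, |A i j|

/-- Spectral (ℓ2 operator) norm of a real matrix. -/
noncomputable def specNorm {n : Type*} [Fintype n] [DecidableEq n] (A : Matrix n n ℝ) : ℝ :=
  ‖Matrix.toEuclideanCLM (𝕜 := ℝ) A‖

/-- Largest eigenvalue ρ₁(A) of a symmetric real matrix (junk value 0 otherwise). -/
noncomputable def maxEig {n : Type*} [Fintype n] [DecidableEq n] (A : Matrix n n ℝ) : ℝ :=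
  if h : A.IsHermitian then ⨆ i, h.eigenvalues i else 0

/-- Smallest eigenvalue ρ_p(A) of a symmetric real matrix (junk value 0 otherwise). -/
noncomputable def minEig {n : Type*} [Fintype n] [DecidableEq n] (A : Matrix n n ℝ) : ℝ :=
  if h : A.IsHermitian then ⨅ i, h.eigenvalues i else 0

/-- Loewner order: A ⪯ B iff B - A is positive semidefinite. -/
def loewnerLE {n : Type*} [Fintype n] (A B : Matrix n n ℝ) : Prop := (B - A).PosSemidef

/-- Entrywise soft-thresholding operator. -/
noncomputable def Sft {n : Type*} (A : Matrix n n ℝ) (τ : ℝ) : Matrix n n ℝ :=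
  Matrix.of fun i j => Real.sign (A i j) * max (|A i j| - τ) 0

/-- The elastic-net penalized Gaussian likelihood objective
  F(Ω) = tr(S̃Ω) − log det Ω + γ1‖Ω‖₁ + γ2‖Ω‖_F². -/
noncomputable def genObj {n : Type*} [Fintype n] [DecidableEq n]
    (S : Matrix n n ℝ) (γ1 γ2 : ℝ) (Ω : Matrix n n ℝ) : ℝ :=
  (S * Ω).trace - Real.log Ω.det + γ1 * l1Norm Ω + γ2 * (frobNorm Ω)^2

/-!
By the first-order optimality conditions, `-∇f(Ω*)` is an entrywise subgradient of `γ1‖·‖₁` at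
`Ω*`, where `f` is the smooth part of the objective. Hence `Ω*` is a fixed point of GEN-ISTA, and
`|∇f(Ω*)ᵢⱼ| ≤ γ1`; testing `∇f(Ω*) = S̃ - Ω*⁻¹ + 2γ2Ω*` on a unit eigenvector of `Ω*` with
eigenvalue `λ` gives `λ⁻¹ ≤ ρ₁(S̃) + γ1 p + 2γ2λ`, i.e. `λ ≥ α`.

For `X, Y ⪰ αI` the gradient steps `G(X) = X - t∇f(X)` satisfy
`G(X) - G(Y) = (1 - 2tγ2)(X - Y) - t X⁻¹(X - Y)Y⁻¹`. In eigenbases of `X` and `Y` this acts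
entrywise with multipliers `1 - 2tγ2 - t/(λᵢνⱼ) ∈ [0, 1]`, so `G` is nonexpansive in the
Frobenius norm; so is soft-thresholding. Therefore `‖Ω⁽ᵏ⁾ - Ω*‖_F ≤ ‖Ω⁽⁰⁾ - Ω*‖_F`, and
`Ω⁽ᵏ⁾ ⪯ (‖Ω*‖₂ + ‖Ω⁽ᵏ⁾ - Ω*‖_F) I`.
-/

open Set Filter Topology

open scoped MatrixOrder

noncomputable def softThreshold (τ x : ℝ) : ℝ := Real.sign x * max (|x| - τ) 0

noncomputable def absDirDeriv (a b : ℝ) : ℝ := if a = 0 then |b| else Real.sign a * b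

section Scalar

lemma softThreshold_eq_max_add_min {τ : ℝ} (hτ : 0 ≤ τ) (x : ℝ) :
    softThreshold τ x = max (x - τ) 0 + min (x + τ) 0 := by
  unfold softThreshold
  rcases lt_trichotomy x 0 with hx | rfl | hx
  · rw [Real.sign_of_neg hx, abs_of_neg hx, max_eq_right (by linarith : x - τ ≤ 0)]
    rcases le_total (-x - τ) 0 with h | h
    · rw [max_eq_right h, min_eq_right (by linarith)]; ring
    · rw [max_eq_left h, min_eq_left (by linarith)]; ring
  · simp [hτ]
  · rw [Real.sign_of_pos hx, abs_of_pos hx, one_mul, min_eq_right (by linarith), add_zero]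

lemma abs_softThreshold_sub_le {τ : ℝ} (hτ : 0 ≤ τ) (x y : ℝ) :
    |softThreshold τ x - softThreshold τ y| ≤ |x - y| := by
  rw [softThreshold_eq_max_add_min hτ, softThreshold_eq_max_add_min hτ, abs_le]
  rcases max_cases (x - τ) 0 with ⟨e1, _⟩ | ⟨e1, _⟩ <;>
  rcases min_cases (x + τ) 0 with ⟨e2, _⟩ | ⟨e2, _⟩ <;>
  rcases max_cases (y - τ) 0 with ⟨e3, _⟩ | ⟨e3, _⟩ <;>
  rcases min_cases (y + τ) 0 with ⟨e4, _⟩ | ⟨e4, _⟩ <;>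
  rw [e1, e2, e3, e4] <;>
  rcases abs_cases (x - y) with ⟨h, _⟩ | ⟨h, _⟩ <;> constructor <;> linarith

lemma hasDerivWithinAt_abs_add_mul (a b : ℝ) :
    HasDerivWithinAt (fun s => |a + s * b|) (absDirDeriv a b) (Ici 0) 0 := by
  unfold absDirDeriv
  split_ifs with ha
  · subst ha
    have hlin : HasDerivWithinAt (fun s : ℝ => s * |b|) |b| (Ici 0) 0 := by
      simpa using (hasDerivAt_mul_const |b|).hasDerivWithinAt (x := (0 : ℝ))
    refine hlin.congr_of_mem (fun s hs => ?_) self_mem_Ici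
    rw [zero_add, abs_mul, abs_of_nonneg (mem_Ici.mp hs)]
  · have hin : HasDerivAt (fun s => a + s * b) b 0 := by
      simpa using ((hasDerivAt_id (0 : ℝ)).mul_const b).const_add a
    rcases lt_or_gt_of_ne ha with ha | ha
    · have h := (hasDerivAt_abs_neg (x := a + 0 * b) (by simpa using ha)).comp 0 hin
      rw [Real.sign_of_neg ha]
      exact h.hasDerivWithinAt
    · have h := (hasDerivAt_abs_pos (x := a + 0 * b) (by simpa using ha)).comp 0 hin
      rw [Real.sign_of_pos ha]
      exact h.hasDerivWithinAt

lemma absDirDeriv_zero_right (a : ℝ) : absDirDeriv a 0 = 0 := by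
  simp [absDirDeriv]

lemma IsLocalMinOn.hasDerivWithinAt_Ici_nonneg {f : ℝ → ℝ} {a f' : ℝ}
    (h : IsLocalMinOn f (Ici a) a) (hf : HasDerivWithinAt f f' (Ici a) a) : 0 ≤ f' := by
  have hmem : (1 : ℝ) ∈ posTangentConeAt (Ici a) a :=
    mem_posTangentConeAt_of_segment_subset (by simp [segment_eq_Icc, Icc_subset_Ici_self])
  simpa using h.hasFDerivWithinAt_nonneg hf hmem

section Subgradient

-- `h` says that `-w` is a subgradient of `γ * |·|` at `a`.
variable {w γ a : ℝ} (h : ∀ c, 0 ≤ w * c + γ * absDirDeriv a c)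
include h

lemma eq_neg_mul_sign_of_dirDeriv_nonneg (ha : a ≠ 0) : w = -γ * Real.sign a := by
  have h1 := h 1
  have h2 := h (-1)
  simp only [absDirDeriv, if_neg ha] at h1 h2
  linarith

lemma abs_le_of_dirDeriv_nonneg_of_eq_zero (ha : a = 0) : |w| ≤ γ := by
  have h1 := h 1
  have h2 := h (-1)
  simp only [absDirDeriv, if_pos ha] at h1 h2
  rw [abs_le]; constructor <;> norm_num at h1 h2 <;> linarith

lemma abs_le_of_dirDeriv_nonneg (hγ : 0 ≤ γ) : |w| ≤ γ := by
  rcases eq_or_ne a 0 with ha | ha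
  · exact abs_le_of_dirDeriv_nonneg_of_eq_zero h ha
  · rw [eq_neg_mul_sign_of_dirDeriv_nonneg h ha, abs_mul, abs_neg, abs_of_nonneg hγ]
    rcases Real.sign_apply_eq_of_ne_zero a ha with hs | hs <;> simp [hs]

lemma softThreshold_sub_mul_eq_self {t : ℝ} (ht : 0 < t) (hγ : 0 ≤ γ) :
    softThreshold (t * γ) (a - t * w) = a := by
  unfold softThreshold
  rcases lt_trichotomy a 0 with ha | ha | ha
  · rw [eq_neg_mul_sign_of_dirDeriv_nonneg h ha.ne, Real.sign_of_neg ha]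
    have hlt : a - t * (-γ * -1) < 0 := by nlinarith
    rw [Real.sign_of_neg hlt, abs_of_neg hlt, max_eq_left (by nlinarith)]
    ring
  · have hw := abs_le_of_dirDeriv_nonneg_of_eq_zero h ha
    have hle : |a - t * w| - t * γ ≤ 0 := by
      rw [ha, zero_sub, abs_neg, abs_mul, abs_of_pos ht]
      nlinarith
    rw [max_eq_right hle, mul_zero, ha]
  · rw [eq_neg_mul_sign_of_dirDeriv_nonneg h ha.ne', Real.sign_of_pos ha]
    have hpos : 0 < a - t * (-γ * 1) := by nlinarith
    rw [Real.sign_of_pos hpos, abs_of_pos hpos, max_eq_left (by nlinarith)]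
    ring

end Subgradient

end Scalar

section Frobenius

variable {n : Type*} [Fintype n]

lemma frobNorm_sq (A : Matrix n n ℝ) : frobNorm A ^ 2 = ∑ i, ∑ j, A i j ^ 2 :=
  Real.sq_sqrt (by positivity)

lemma frobNorm_le_of_abs_le {A B : Matrix n n ℝ} (h : ∀ i j, |A i j| ≤ |B i j|) :
    frobNorm A ≤ frobNorm B :=
  Real.sqrt_le_sqrt <| Finset.sum_le_sum fun i _ => Finset.sum_le_sum fun j _ =>
    sq_le_sq.mpr (h i j)

lemma frobNorm_Sft_sub_Sft_le (A B : Matrix n n ℝ) {τ : ℝ} (hτ : 0 ≤ τ) :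
    frobNorm (Sft A τ - Sft B τ) ≤ frobNorm (A - B) :=
  frobNorm_le_of_abs_le fun i j => abs_softThreshold_sub_le hτ (A i j) (B i j)

lemma frobNorm_eq_sqrt_trace (A : Matrix n n ℝ) : frobNorm A = Real.sqrt (Aᵀ * A).trace := by
  rw [frobNorm, Matrix.trace, Finset.sum_comm]
  simp [Matrix.mul_apply, sq]

lemma frobNorm_mul_mul_of_orthogonal [DecidableEq n] {U V : Matrix n n ℝ} (hU : U * Uᵀ = 1)
    (hV : V * Vᵀ = 1) (A : Matrix n n ℝ) : frobNorm (Uᵀ * A * V) = frobNorm A := by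
  rw [frobNorm_eq_sqrt_trace, frobNorm_eq_sqrt_trace, Matrix.transpose_mul,
    Matrix.transpose_mul, Matrix.transpose_transpose]
  congr 1
  calc (Vᵀ * (Aᵀ * U) * (Uᵀ * A * V)).trace = (Vᵀ * (Aᵀ * (U * Uᵀ) * A) * V).trace := by
        simp only [Matrix.mul_assoc]
    _ = (V * Vᵀ * (Aᵀ * A)).trace := by
        rw [hU, Matrix.mul_one, Matrix.trace_mul_comm, ← Matrix.mul_assoc]
    _ = (Aᵀ * A).trace := by rw [hV, Matrix.one_mul]

lemma dotProduct_mulVec_le_frobNorm_mul (A : Matrix n n ℝ) (x : n → ℝ) :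
    x ⬝ᵥ A *ᵥ x ≤ frobNorm A * (x ⬝ᵥ x) := by
  have hexp : x ⬝ᵥ A *ᵥ x = ∑ q : n × n, A q.1 q.2 * (x q.1 * x q.2) := by
    simp only [Fintype.sum_prod_type, dotProduct, Matrix.mulVec, Finset.mul_sum]
    exact Finset.sum_congr rfl fun k _ => Finset.sum_congr rfl fun l _ => by ring
  have hx : ∑ q : n × n, (x q.1 * x q.2) ^ 2 = (x ⬝ᵥ x) ^ 2 := by
    simp only [Fintype.sum_prod_type, dotProduct, sq, Finset.sum_mul_sum]
    exact Finset.sum_congr rfl fun k _ => Finset.sum_congr rfl fun l _ => by ring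
  have hA : ∑ q : n × n, A q.1 q.2 ^ 2 = frobNorm A ^ 2 := by
    rw [frobNorm_sq, Fintype.sum_prod_type]
  have hcs := Finset.sum_mul_sq_le_sq_mul_sq Finset.univ
    (fun q : n × n => A q.1 q.2) (fun q => x q.1 * x q.2)
  rw [hA, hx, ← hexp, ← mul_pow] at hcs
  exact le_of_sq_le_sq hcs (mul_nonneg (Real.sqrt_nonneg _) (dotProduct_self_star_nonneg x))

end Frobenius

section Loewner

variable {n : Type*} [Fintype n] [DecidableEq n] {A B : Matrix n n ℝ}

lemma smul_one_loewnerLE_iff (hA : A.IsHermitian) (c : ℝ) :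
    loewnerLE (c • 1) A ↔ ∀ i, c ≤ hA.eigenvalues i := by
  rw [loewnerLE, ← Matrix.le_iff, ← Algebra.algebraMap_eq_smul_one,
    algebraMap_le_iff_le_spectrum hA, hA.spectrum_real_eq_range_eigenvalues,
    Set.forall_mem_range]

lemma loewnerLE_smul_one_iff (hA : A.IsHermitian) (c : ℝ) :
    loewnerLE A (c • 1) ↔ ∀ i, hA.eigenvalues i ≤ c := by
  rw [loewnerLE, ← Matrix.le_iff, ← Algebra.algebraMap_eq_smul_one,
    le_algebraMap_iff_spectrum_le hA, hA.spectrum_real_eq_range_eigenvalues,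
    Set.forall_mem_range]

lemma loewnerLE_maxEig_smul_one (hA : A.IsHermitian) : loewnerLE A (maxEig A • 1) :=
  (loewnerLE_smul_one_iff hA _).mpr fun i => by
    rw [maxEig, dif_pos hA]
    exact le_ciSup (Set.finite_range _).bddAbove i

lemma minEig_smul_one_loewnerLE (hA : A.IsHermitian) : loewnerLE (minEig A • 1) A :=
  (smul_one_loewnerLE_iff hA _).mpr fun i => by
    rw [minEig, dif_pos hA]
    exact ciInf_le (Set.finite_range _).bddBelow i

omit [DecidableEq n] in
lemma loewnerLE.dotProduct_mulVec_le (h : loewnerLE A B) (x : n → ℝ) :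
    x ⬝ᵥ A *ᵥ x ≤ x ⬝ᵥ B *ᵥ x := by
  have := h.dotProduct_mulVec_nonneg x
  rw [star_trivial, Matrix.sub_mulVec, dotProduct_sub] at this
  linarith

omit [DecidableEq n] in
lemma loewnerLE_of_dotProduct_mulVec_le (hBA : (B - A).IsHermitian)
    (h : ∀ x : n → ℝ, x ⬝ᵥ A *ᵥ x ≤ x ⬝ᵥ B *ᵥ x) : loewnerLE A B :=
  Matrix.PosSemidef.of_dotProduct_mulVec_nonneg hBA fun x => by
    rw [star_trivial, Matrix.sub_mulVec, dotProduct_sub, sub_nonneg]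
    exact h x

lemma dotProduct_smul_one_mulVec (c : ℝ) (x : n → ℝ) :
    x ⬝ᵥ (c • (1 : Matrix n n ℝ)) *ᵥ x = c * (x ⬝ᵥ x) := by
  rw [Matrix.smul_mulVec, Matrix.one_mulVec, dotProduct_smul, smul_eq_mul]

lemma loewnerLE.isHermitian {c : ℝ} (h : loewnerLE (c • 1) A) : A.IsHermitian := by
  have := (Matrix.PosSemidef.isHermitian h).add (Matrix.isHermitian_one.smul (.all c))
  rwa [sub_add_cancel] at this

lemma loewnerLE.posDef {c : ℝ} (h : loewnerLE (c • 1) A) (hc : 0 < c) : A.PosDef := by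
  simpa using Matrix.PosDef.posSemidef_add h (Matrix.PosDef.one.smul hc)

lemma Matrix.PosDef.exists_pos_smul_one_loewnerLE (hA : A.PosDef) :
    ∃ c : ℝ, 0 < c ∧ loewnerLE (c • 1) A := by
  rcases isEmpty_or_nonempty n with hn | hn
  · exact ⟨1, one_pos, (smul_one_loewnerLE_iff hA.1 1).mpr isEmptyElim⟩
  · obtain ⟨i₀, hi₀⟩ := Finite.exists_min hA.1.eigenvalues
    exact ⟨_, hA.eigenvalues_pos i₀, (smul_one_loewnerLE_iff hA.1 _).mpr hi₀⟩

lemma Matrix.PosDef.eventually_posDef_add_smul (hA : A.PosDef) (hB : B.IsHermitian) :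
    ∀ᶠ s in 𝓝[≥] (0 : ℝ), (A + s • B).PosDef := by
  obtain ⟨c, hc, hcA⟩ := hA.exists_pos_smul_one_loewnerLE
  have hpos : ∀ᶠ s in 𝓝 (0 : ℝ), 0 < c + s * minEig B :=
    ((continuous_const.add (continuous_id.mul continuous_const)).tendsto' 0 c
      (by simp)).eventually (lt_mem_nhds hc)
  filter_upwards [eventually_nhdsWithin_of_eventually_nhds hpos, self_mem_nhdsWithin] with s hs hs0
  have hle : loewnerLE ((c + s * minEig B) • 1) (A + s • B) := by
    have := hcA.add ((minEig_smul_one_loewnerLE hB).smul (mem_Ici.mp hs0))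
    rw [loewnerLE]
    convert this using 1
    module
  exact hle.posDef hs

end Loewner

section Spectral

variable {n : Type*} [Fintype n] [DecidableEq n] {A : Matrix n n ℝ}

lemma Matrix.IsHermitian.eigenvectorUnitary_mul_transpose (hA : A.IsHermitian) :
    (hA.eigenvectorUnitary : Matrix n n ℝ) * (hA.eigenvectorUnitary : Matrix n n ℝ)ᵀ = 1 := by
  simpa [Matrix.star_eq_conjTranspose] using
    Matrix.mem_unitaryGroup_iff.mp hA.eigenvectorUnitary.2

lemma Matrix.IsHermitian.transpose_mul_eigenvectorUnitary (hA : A.IsHermitian) :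
    (hA.eigenvectorUnitary : Matrix n n ℝ)ᵀ * (hA.eigenvectorUnitary : Matrix n n ℝ) = 1 := by
  simpa [Matrix.star_eq_conjTranspose] using
    Matrix.mem_unitaryGroup_iff'.mp hA.eigenvectorUnitary.2

lemma Matrix.IsHermitian.eq_mul_diagonal_mul (hA : A.IsHermitian) :
    A = (hA.eigenvectorUnitary : Matrix n n ℝ) * Matrix.diagonal hA.eigenvalues *
      (hA.eigenvectorUnitary : Matrix n n ℝ)ᵀ := by
  conv_lhs => rw [hA.spectral_theorem]
  simp [Matrix.star_eq_conjTranspose]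

lemma Matrix.PosDef.inv_eq_mul_diagonal_mul (hA : A.PosDef) :
    A⁻¹ = (hA.1.eigenvectorUnitary : Matrix n n ℝ) * Matrix.diagonal (hA.1.eigenvalues)⁻¹ *
      (hA.1.eigenvectorUnitary : Matrix n n ℝ)ᵀ := by
  set U : Matrix n n ℝ := ↑hA.1.eigenvectorUnitary
  have hdiag : Matrix.diagonal hA.1.eigenvalues * Matrix.diagonal (hA.1.eigenvalues)⁻¹ = 1 := by
    rw [Matrix.diagonal_mul_diagonal, ← Matrix.diagonal_one]
    exact congrArg _ (funext fun i => mul_inv_cancel₀ (hA.eigenvalues_pos i).ne')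
  refine Matrix.inv_eq_right_inv ?_
  calc A * (U * Matrix.diagonal (hA.1.eigenvalues)⁻¹ * Uᵀ)
      = U * Matrix.diagonal hA.1.eigenvalues * Uᵀ *
        (U * Matrix.diagonal (hA.1.eigenvalues)⁻¹ * Uᵀ) :=
        congrArg (· * _) hA.1.eq_mul_diagonal_mul
    _ = U * Matrix.diagonal hA.1.eigenvalues * (Uᵀ * U) *
        Matrix.diagonal (hA.1.eigenvalues)⁻¹ * Uᵀ := by simp only [Matrix.mul_assoc]
    _ = 1 := by
      rw [hA.1.transpose_mul_eigenvectorUnitary, Matrix.mul_one, Matrix.mul_assoc U, hdiag,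
        Matrix.mul_one, hA.1.eigenvectorUnitary_mul_transpose]

end Spectral

section Contraction

variable {n : Type*} [Fintype n] [DecidableEq n]

lemma frobNorm_smul_sub_smul_inv_mul_mul_inv_le {X Y : Matrix n n ℝ} (hX : X.PosDef)
    (hY : Y.PosDef) {β t : ℝ}
    (h : ∀ i j, |β - t * ((hX.1.eigenvalues i)⁻¹ * (hY.1.eigenvalues j)⁻¹)| ≤ 1)
    (D : Matrix n n ℝ) : frobNorm (β • D - t • (X⁻¹ * D * Y⁻¹)) ≤ frobNorm D := by
  rw [hX.inv_eq_mul_diagonal_mul, hY.inv_eq_mul_diagonal_mul]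
  have hU := hX.1.eigenvectorUnitary_mul_transpose
  have hV := hY.1.eigenvectorUnitary_mul_transpose
  have hUU := hX.1.transpose_mul_eigenvectorUnitary
  have hVV := hY.1.transpose_mul_eigenvectorUnitary
  set U : Matrix n n ℝ := ↑hX.1.eigenvectorUnitary
  set V : Matrix n n ℝ := ↑hY.1.eigenvectorUnitary
  set E := Uᵀ * D * V
  have hconj : Uᵀ * (β • D - t • (U * Matrix.diagonal (hX.1.eigenvalues)⁻¹ * Uᵀ * D *
      (V * Matrix.diagonal (hY.1.eigenvalues)⁻¹ * Vᵀ))) * V = β • E - t •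
      (Matrix.diagonal (hX.1.eigenvalues)⁻¹ * E * Matrix.diagonal (hY.1.eigenvalues)⁻¹) := by
    calc _ = β • E - t • ((Uᵀ * U) * Matrix.diagonal (hX.1.eigenvalues)⁻¹ * E *
          Matrix.diagonal (hY.1.eigenvalues)⁻¹ * (Vᵀ * V)) := by
          simp only [E, Matrix.mul_sub, Matrix.sub_mul, Matrix.mul_smul, Matrix.smul_mul,
            Matrix.mul_assoc]
      _ = _ := by rw [hUU, hVV, Matrix.one_mul, Matrix.mul_one]
  rw [← frobNorm_mul_mul_of_orthogonal hU hV D, ← frobNorm_mul_mul_of_orthogonal hU hV, hconj]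
  refine frobNorm_le_of_abs_le fun i j => ?_
  have hentry : (β • E - t • (Matrix.diagonal (hX.1.eigenvalues)⁻¹ * E *
      Matrix.diagonal (hY.1.eigenvalues)⁻¹)) i j =
      (β - t * ((hX.1.eigenvalues i)⁻¹ * (hY.1.eigenvalues j)⁻¹)) * E i j := by
    simp only [Matrix.sub_apply, Matrix.smul_apply, Matrix.mul_diagonal, Matrix.diagonal_mul,
      Pi.inv_apply, smul_eq_mul]
    ring
  rw [hentry, abs_mul]
  exact mul_le_of_le_one_left (abs_nonneg _) (h i j)

lemma abs_one_sub_mul_sub_mul_inv_mul_inv_le_one {α γ t l m : ℝ} (hα : 0 < α) (hl : α ≤ l)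
    (hm : α ≤ m) (hγ : 0 ≤ γ) (ht0 : 0 ≤ t) (ht : t ≤ α ^ 2 / (2 * γ * α ^ 2 + 1)) :
    |1 - 2 * t * γ - t * (l⁻¹ * m⁻¹)| ≤ 1 := by
  have hlm : l⁻¹ * m⁻¹ ≤ (α ^ 2)⁻¹ := by
    rw [sq, mul_inv]
    exact mul_le_mul (inv_anti₀ hα hl) (inv_anti₀ hα hm) (inv_nonneg.mpr (hα.trans_le hm).le)
      (inv_nonneg.mpr hα.le)
  have hsum : 2 * t * γ + t * (α ^ 2)⁻¹ ≤ 1 := by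
    have hα2 : 0 < α ^ 2 := by positivity
    calc 2 * t * γ + t * (α ^ 2)⁻¹ = t * (2 * γ * α ^ 2 + 1) / α ^ 2 := by field_simp
      _ ≤ 1 := (div_le_one hα2).mpr ((le_div_iff₀ (by positivity)).mp ht)
  have hnonneg : 0 ≤ t * (l⁻¹ * m⁻¹) :=
    mul_nonneg ht0 (mul_nonneg (inv_nonneg.mpr (hα.trans_le hl).le)
      (inv_nonneg.mpr (hα.trans_le hm).le))
  rw [abs_le]
  constructor <;> nlinarith [mul_le_mul_of_nonneg_left hlm ht0, mul_nonneg ht0 hγ]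

end Contraction

section GradientStep

variable {n : Type*} [Fintype n] [DecidableEq n]

noncomputable def smoothGrad (S : Matrix n n ℝ) (γ2 : ℝ) (X : Matrix n n ℝ) : Matrix n n ℝ :=
  S - X⁻¹ + (2 * γ2) • X

noncomputable def gradStep (S : Matrix n n ℝ) (γ2 t : ℝ) (X : Matrix n n ℝ) : Matrix n n ℝ :=
  X - t • smoothGrad S γ2 X

lemma gradStep_sub_gradStep (S : Matrix n n ℝ) (γ2 t : ℝ) {X Y : Matrix n n ℝ}
    (hX : IsUnit X.det) (hY : IsUnit Y.det) :
    gradStep S γ2 t X - gradStep S γ2 t Y =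
      (1 - 2 * t * γ2) • (X - Y) - t • (X⁻¹ * (X - Y) * Y⁻¹) := by
  have hinv : X⁻¹ * (X - Y) * Y⁻¹ = Y⁻¹ - X⁻¹ := by
    rw [Matrix.mul_sub, Matrix.nonsing_inv_mul _ hX, Matrix.sub_mul, Matrix.one_mul,
      Matrix.mul_assoc, Matrix.mul_nonsing_inv _ hY, Matrix.mul_one]
  rw [hinv, gradStep, gradStep, smoothGrad, smoothGrad]
  module

lemma frobNorm_gradStep_sub_gradStep_le (S : Matrix n n ℝ) {γ2 t α : ℝ} (hα : 0 < α)
    (hγ2 : 0 ≤ γ2) (ht0 : 0 ≤ t) (ht : t ≤ α ^ 2 / (2 * γ2 * α ^ 2 + 1)) {X Y : Matrix n n ℝ}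
    (hX : loewnerLE (α • 1) X) (hY : loewnerLE (α • 1) Y) :
    frobNorm (gradStep S γ2 t X - gradStep S γ2 t Y) ≤ frobNorm (X - Y) := by
  have hXpd := hX.posDef hα
  have hYpd := hY.posDef hα
  rw [gradStep_sub_gradStep S γ2 t ((X.isUnit_iff_isUnit_det).mp hXpd.isUnit)
    ((Y.isUnit_iff_isUnit_det).mp hYpd.isUnit)]
  refine frobNorm_smul_sub_smul_inv_mul_mul_inv_le hXpd hYpd (fun i j => ?_) _
  exact abs_one_sub_mul_sub_mul_inv_mul_inv_le_one hα
    ((smul_one_loewnerLE_iff hXpd.1 α).mp hX i) ((smul_one_loewnerLE_iff hYpd.1 α).mp hY j)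
    hγ2 ht0 ht

end GradientStep

section FirstOrder

variable {n : Type*} [Fintype n] [DecidableEq n]

lemma hasDerivAt_det_one_add_smul (M : Matrix n n ℝ) :
    HasDerivAt (fun s : ℝ => (1 + s • M).det) M.trace 0 := by
  have h := (Matrix.det (1 + (Polynomial.X : Polynomial ℝ) • M.map Polynomial.C)).hasDerivAt 0
  rw [Matrix.derivative_det_one_add_X_smul] at h
  refine h.congr_of_eventuallyEq (.of_forall fun s => ?_)
  simp only [← Polynomial.coe_evalRingHom, RingHom.map_det]
  congr 1
  ext i j
  by_cases hij : i = j <;> simp [hij] <;> ring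

lemma hasDerivAt_log_det_add_smul {Q : Matrix n n ℝ} (hQ : IsUnit Q.det) (V : Matrix n n ℝ) :
    HasDerivAt (fun s : ℝ => Real.log (Q + s • V).det) (Q⁻¹ * V).trace 0 := by
  have hfac : ∀ s : ℝ, (Q + s • V).det = Q.det * (1 + s • (Q⁻¹ * V)).det := fun s => by
    rw [← Matrix.det_mul, Matrix.mul_add, Matrix.mul_one, Matrix.mul_smul, ← Matrix.mul_assoc,
      Matrix.mul_nonsing_inv _ hQ, Matrix.one_mul]
  simp_rw [hfac]
  convert ((hasDerivAt_det_one_add_smul (Q⁻¹ * V)).const_mul Q.det).log (by simpa using hQ.ne_zero)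
    using 1
  field_simp [hQ.ne_zero]
  simp

omit [DecidableEq n] in
lemma hasDerivAt_frobNorm_sq_add_smul (Q V : Matrix n n ℝ) :
    HasDerivAt (fun s : ℝ => frobNorm (Q + s • V) ^ 2) (2 * ∑ i, ∑ j, Q i j * V i j) 0 := by
  simp_rw [frobNorm_sq, Finset.mul_sum]
  refine HasDerivAt.fun_sum fun i _ => HasDerivAt.fun_sum fun j _ => ?_
  have h := (((hasDerivAt_id (0 : ℝ)).mul_const (V i j)).const_add (Q i j)).pow 2
  refine (h.congr_deriv (by simp; ring)).congr_of_eventuallyEq (.of_forall fun s => ?_)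
  simp

omit [DecidableEq n] in
lemma hasDerivWithinAt_l1Norm_add_smul (Q V : Matrix n n ℝ) :
    HasDerivWithinAt (fun s : ℝ => l1Norm (Q + s • V))
      (∑ i, ∑ j, absDirDeriv (Q i j) (V i j)) (Ici 0) 0 := by
  unfold l1Norm
  refine HasDerivWithinAt.fun_sum fun i _ => HasDerivWithinAt.fun_sum fun j _ => ?_
  simpa using hasDerivWithinAt_abs_add_mul (Q i j) (V i j)

omit [DecidableEq n] in
lemma trace_mul_eq_sum_sum_of_isHermitian (A : Matrix n n ℝ) {V : Matrix n n ℝ}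
    (hV : V.IsHermitian) : (A * V).trace = ∑ i, ∑ j, A i j * V i j := by
  refine Finset.sum_congr rfl fun i _ => Finset.sum_congr rfl fun j _ => ?_
  rw [← hV.apply i j]
  simp

end FirstOrder

section Optimality

variable {n : Type*} [Fintype n] [DecidableEq n]

noncomputable def genObjDirDeriv (S : Matrix n n ℝ) (γ1 γ2 : ℝ) (Q V : Matrix n n ℝ) : ℝ :=
  ∑ i, ∑ j, (smoothGrad S γ2 Q i j * V i j + γ1 * absDirDeriv (Q i j) (V i j))

lemma hasDerivWithinAt_genObj_add_smul (S : Matrix n n ℝ) (γ1 γ2 : ℝ) {Q V : Matrix n n ℝ}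
    (hQ : IsUnit Q.det) (hV : V.IsHermitian) :
    HasDerivWithinAt (fun s : ℝ => genObj S γ1 γ2 (Q + s • V)) (genObjDirDeriv S γ1 γ2 Q V)
      (Ici 0) 0 := by
  have htr : HasDerivAt (fun s : ℝ => (S * (Q + s • V)).trace) (S * V).trace 0 := by
    have h := ((hasDerivAt_id (0 : ℝ)).mul_const (S * V).trace).const_add (S * Q).trace
    refine (h.congr_deriv (by simp)).congr_of_eventuallyEq (.of_forall fun s => ?_)
    simp [Matrix.mul_add, Matrix.trace_add]
  have h := ((htr.sub (hasDerivAt_log_det_add_smul hQ V)).hasDerivWithinAt.add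
    ((hasDerivWithinAt_l1Norm_add_smul Q V).const_mul γ1)).add
    ((hasDerivAt_frobNorm_sq_add_smul Q V).const_mul γ2).hasDerivWithinAt
  refine h.congr_deriv ?_
  simp only [genObjDirDeriv, smoothGrad, trace_mul_eq_sum_sum_of_isHermitian _ hV, Finset.mul_sum,
    ← Finset.sum_sub_distrib, ← Finset.sum_add_distrib, Matrix.add_apply, Matrix.sub_apply,
    Matrix.smul_apply, smul_eq_mul]
  exact Finset.sum_congr rfl fun i _ => Finset.sum_congr rfl fun j _ => by ring

lemma genObjDirDeriv_nonneg {S Q : Matrix n n ℝ} {γ1 γ2 : ℝ} (hQ : Q.PosDef)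
    (hmin : ∀ M : Matrix n n ℝ, M.PosDef → genObj S γ1 γ2 Q ≤ genObj S γ1 γ2 M)
    {V : Matrix n n ℝ} (hV : V.IsHermitian) : 0 ≤ genObjDirDeriv S γ1 γ2 Q V := by
  have hloc : IsLocalMinOn (fun s : ℝ => genObj S γ1 γ2 (Q + s • V)) (Ici 0) 0 := by
    filter_upwards [hQ.eventually_posDef_add_smul hV] with s hs
    simpa using hmin _ hs
  exact hloc.hasDerivWithinAt_Ici_nonneg
    (hasDerivWithinAt_genObj_add_smul S γ1 γ2 ((Q.isUnit_iff_isUnit_det).mp hQ.isUnit) hV)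

lemma genObjDirDeriv_add_of_disjoint (S : Matrix n n ℝ) (γ1 γ2 : ℝ) (Q : Matrix n n ℝ)
    {A B : Matrix n n ℝ} (h : ∀ i j, A i j = 0 ∨ B i j = 0) :
    genObjDirDeriv S γ1 γ2 Q (A + B) = genObjDirDeriv S γ1 γ2 Q A + genObjDirDeriv S γ1 γ2 Q B := by
  simp only [genObjDirDeriv, ← Finset.sum_add_distrib]
  refine Finset.sum_congr rfl fun i _ => Finset.sum_congr rfl fun j _ => ?_
  rcases h i j with h | h <;> simp [h, absDirDeriv_zero_right]

lemma genObjDirDeriv_single (S : Matrix n n ℝ) (γ1 γ2 : ℝ) (Q : Matrix n n ℝ) (i j : n) (c : ℝ) :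
    genObjDirDeriv S γ1 γ2 Q (Matrix.single i j c) =
      smoothGrad S γ2 Q i j * c + γ1 * absDirDeriv (Q i j) c := by
  rw [genObjDirDeriv, Finset.sum_eq_single i, Finset.sum_eq_single j]
  · simp
  · intro l _ hl
    simp [Matrix.single_apply_of_col_ne _ _ (Ne.symm hl), absDirDeriv_zero_right]
  · simp
  · intro k _ hk
    simp [Matrix.single_apply_of_row_ne (Ne.symm hk), absDirDeriv_zero_right]
  · simp

lemma smoothGrad_dirDeriv_nonneg {S Q : Matrix n n ℝ} {γ1 γ2 : ℝ} (hS : S.IsHermitian)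
    (hQ : Q.PosDef) (hmin : ∀ M : Matrix n n ℝ, M.PosDef → genObj S γ1 γ2 Q ≤ genObj S γ1 γ2 M)
    (i j : n) (c : ℝ) : 0 ≤ smoothGrad S γ2 Q i j * c + γ1 * absDirDeriv (Q i j) c := by
  by_cases hij : i = j
  · subst hij
    have hV : (Matrix.single i i c).IsHermitian := by
      simp [Matrix.IsHermitian]
    simpa [genObjDirDeriv_single] using genObjDirDeriv_nonneg hQ hmin hV
  · have hV : (Matrix.single i j c + Matrix.single j i c).IsHermitian := by
      simp [Matrix.IsHermitian, add_comm]
    have h := genObjDirDeriv_nonneg hQ hmin hV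
    have hW : (smoothGrad S γ2 Q).IsHermitian :=
      (hS.sub hQ.inv.1).add (hQ.1.smul (.all _))
    rw [genObjDirDeriv_add_of_disjoint, genObjDirDeriv_single, genObjDirDeriv_single,
      ← hW.apply j i, ← hQ.1.apply j i] at h
    · simp only [star_trivial] at h
      linarith
    · intro k l
      rw [Matrix.single_apply, Matrix.single_apply]
      by_cases h1 : i = k ∧ j = l
      · exact .inr (if_neg fun h2 => hij (h1.1.trans h2.1.symm))
      · exact .inl (if_neg h1)

lemma abs_smoothGrad_apply_le {S Q : Matrix n n ℝ} {γ1 γ2 : ℝ} (hS : S.IsHermitian)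
    (hγ1 : 0 ≤ γ1) (hQ : Q.PosDef)
    (hmin : ∀ M : Matrix n n ℝ, M.PosDef → genObj S γ1 γ2 Q ≤ genObj S γ1 γ2 M) (i j : n) :
    |smoothGrad S γ2 Q i j| ≤ γ1 :=
  abs_le_of_dirDeriv_nonneg (smoothGrad_dirDeriv_nonneg hS hQ hmin i j) hγ1

lemma Sft_gradStep_eq_self {S Q : Matrix n n ℝ} {γ1 γ2 t : ℝ} (hS : S.IsHermitian)
    (hγ1 : 0 ≤ γ1) (ht : 0 < t) (hQ : Q.PosDef)
    (hmin : ∀ M : Matrix n n ℝ, M.PosDef → genObj S γ1 γ2 Q ≤ genObj S γ1 γ2 M) :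
    Sft (gradStep S γ2 t Q) (t * γ1) = Q := by
  ext i j
  exact softThreshold_sub_mul_eq_self (smoothGrad_dirDeriv_nonneg hS hQ hmin i j) ht hγ1

end Optimality

section LowerBound

variable {n : Type*} [Fintype n] [DecidableEq n]

omit [DecidableEq n] in
lemma abs_dotProduct_mulVec_le {W : Matrix n n ℝ} {γ : ℝ} (hγ : 0 ≤ γ)
    (hW : ∀ i j, |W i j| ≤ γ) (x : n → ℝ) :
    |x ⬝ᵥ W *ᵥ x| ≤ γ * Fintype.card n * (x ⬝ᵥ x) := by
  have hx : (∑ i, |x i|) ^ 2 ≤ Fintype.card n * (x ⬝ᵥ x) := by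
    simpa [dotProduct, ← sq] using
      sq_sum_le_card_mul_sum_sq (s := Finset.univ) (f := fun i => |x i|)
  calc |x ⬝ᵥ W *ᵥ x| = |∑ i, ∑ j, x i * W i j * x j| := by
        simp only [dotProduct, Matrix.mulVec, Finset.mul_sum, mul_assoc]
    _ ≤ ∑ i, ∑ j, |x i| * γ * |x j| := by
        refine (Finset.abs_sum_le_sum_abs _ _).trans (Finset.sum_le_sum fun i _ =>
          (Finset.abs_sum_le_sum_abs _ _).trans (Finset.sum_le_sum fun j _ => ?_))
        rw [abs_mul, abs_mul]
        gcongr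
        exact hW i j
    _ = γ * (∑ i, |x i|) ^ 2 := by
        rw [sq, Finset.sum_mul_sum, Finset.mul_sum]
        exact Finset.sum_congr rfl fun i _ => by rw [Finset.mul_sum]; ring_nf
    _ ≤ γ * Fintype.card n * (x ⬝ᵥ x) := by
        rw [mul_assoc]
        exact mul_le_mul_of_nonneg_left hx hγ

lemma le_of_inv_le_add_mul {c γ l α : ℝ} (hl : 0 < l) (h : l⁻¹ ≤ c + 2 * γ * l)
    (hα : α⁻¹ = (c + √(c ^ 2 + 8 * γ)) / 2) : α ≤ l := by
  have hb : 0 < l⁻¹ := inv_pos.mpr hl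
  have hsq : l⁻¹ ^ 2 ≤ c * l⁻¹ + 2 * γ := by
    have := mul_le_mul_of_nonneg_right h hb.le
    rwa [add_mul, mul_assoc, mul_inv_cancel₀ hl.ne', mul_one, ← sq] at this
  have hroot : 2 * l⁻¹ - c ≤ √(c ^ 2 + 8 * γ) :=
    (le_abs_self _).trans (Real.abs_le_sqrt (by nlinarith))
  have hle : l⁻¹ ≤ α⁻¹ := by rw [hα]; linarith
  simpa using inv_anti₀ hb hle

lemma pos_of_inv_eq_half_add_sqrt {c γ α : ℝ} (hγ : 0 < γ)
    (hα : α⁻¹ = (c + √(c ^ 2 + 8 * γ)) / 2) : 0 < α := by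
  have hc : |c| < √(c ^ 2 + 8 * γ) :=
    Real.lt_sqrt_of_sq_lt (by rw [sq_abs]; linarith)
  refine inv_pos.mp (hα ▸ ?_)
  linarith [neg_abs_le c]

lemma smul_one_loewnerLE_of_abs_smoothGrad_le {S Q : Matrix n n ℝ} {γ1 γ2 α : ℝ}
    (hS : S.IsHermitian) (hQ : Q.PosDef) (hγ1 : 0 ≤ γ1)
    (hW : ∀ i j, |smoothGrad S γ2 Q i j| ≤ γ1)
    (hα : α⁻¹ = (maxEig S + γ1 * Fintype.card n +
      √((maxEig S + γ1 * Fintype.card n) ^ 2 + 8 * γ2)) / 2) :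
    loewnerLE (α • 1) Q := by
  refine (smul_one_loewnerLE_iff hQ.1 α).mpr fun i =>
    le_of_inv_le_add_mul (hQ.eigenvalues_pos i) ?_ hα
  set l := hQ.1.eigenvalues i
  set v := (hQ.1.eigenvectorBasis i).ofLp
  have hvv : v ⬝ᵥ v = 1 := by
    have h := real_inner_self_eq_norm_sq (hQ.1.eigenvectorBasis i)
    rw [hQ.1.eigenvectorBasis.orthonormal.1 i, EuclideanSpace.inner_eq_star_dotProduct,
      star_trivial] at h
    simpa using h
  have hQv : Q *ᵥ v = l • v := hQ.1.mulVec_eigenvectorBasis i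
  have hQinvv : Q⁻¹ *ᵥ v = l⁻¹ • v := by
    have hdet := (Q.isUnit_iff_isUnit_det).mp hQ.isUnit
    rw [← one_smul ℝ (Q⁻¹ *ᵥ v), ← inv_mul_cancel₀ (hQ.eigenvalues_pos i).ne', ← smul_smul,
      ← Matrix.mulVec_smul, ← hQv, Matrix.mulVec_mulVec, Matrix.nonsing_inv_mul _ hdet,
      Matrix.one_mulVec]
  have hQinv : Q⁻¹ = S + (2 * γ2) • Q - smoothGrad S γ2 Q := by
    rw [smoothGrad]; abel
  have hSv : v ⬝ᵥ S *ᵥ v ≤ maxEig S := by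
    simpa [dotProduct_smul_one_mulVec, hvv] using
      (loewnerLE_maxEig_smul_one hS).dotProduct_mulVec_le v
  have hWv := abs_dotProduct_mulVec_le hγ1 hW v
  have key : l⁻¹ = v ⬝ᵥ S *ᵥ v + 2 * γ2 * l - v ⬝ᵥ smoothGrad S γ2 Q *ᵥ v := by
    have := congrArg (v ⬝ᵥ · *ᵥ v) hQinv
    simpa [Matrix.sub_mulVec, Matrix.add_mulVec, Matrix.smul_mulVec, hQv, hQinvv, hvv,
      mul_assoc] using this
  rw [hvv, mul_one] at hWv
  linarith [neg_abs_le (v ⬝ᵥ smoothGrad S γ2 Q *ᵥ v)]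

end LowerBound

section UpperBound

variable {n : Type*} [Fintype n] [DecidableEq n]

lemma dotProduct_mulVec_le_specNorm_mul (A : Matrix n n ℝ) (x : n → ℝ) :
    x ⬝ᵥ A *ᵥ x ≤ specNorm A * (x ⬝ᵥ x) := by
  set y : EuclideanSpace ℝ n := WithLp.toLp 2 x
  set T := Matrix.toEuclideanCLM (𝕜 := ℝ) A
  have hxAx : x ⬝ᵥ A *ᵥ x = inner ℝ y (T y) := by
    simp [T, y, Matrix.toEuclideanCLM_toLp, EuclideanSpace.inner_eq_star_dotProduct,
      dotProduct_comm]
  have hxx : x ⬝ᵥ x = ‖y‖ * ‖y‖ := by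
    rw [← real_inner_self_eq_norm_mul_norm, EuclideanSpace.inner_eq_star_dotProduct]
    simp [y]
  rw [hxAx, hxx, specNorm]
  calc inner ℝ y (T y) ≤ ‖y‖ * ‖T y‖ := real_inner_le_norm _ _
    _ ≤ ‖y‖ * (‖T‖ * ‖y‖) := by gcongr; exact T.le_opNorm y
    _ = ‖T‖ * (‖y‖ * ‖y‖) := by ring

lemma loewnerLE_smul_one_of_frobNorm_sub_le {A Q : Matrix n n ℝ} (hA : A.IsHermitian) {r : ℝ}
    (h : frobNorm (A - Q) ≤ r) : loewnerLE A ((specNorm Q + r) • 1) := by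
  refine loewnerLE_of_dotProduct_mulVec_le
    ((Matrix.isHermitian_one.smul (.all _)).sub hA) fun x => ?_
  have hsplit : x ⬝ᵥ A *ᵥ x = x ⬝ᵥ Q *ᵥ x + x ⬝ᵥ (A - Q) *ᵥ x := by
    rw [Matrix.sub_mulVec, dotProduct_sub]; ring
  have hQ := dotProduct_mulVec_le_specNorm_mul Q x
  have hAQ := dotProduct_mulVec_le_frobNorm_mul (A - Q) x
  have hr := mul_le_mul_of_nonneg_right h (dotProduct_self_star_nonneg x)
  rw [star_trivial] at hr
  rw [dotProduct_smul_one_mulVec, hsplit]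
  linarith

end UpperBound

theorem stmt13_general {p : ℕ}
    (S : Matrix (Fin p) (Fin p) ℝ) (hS : S.IsHermitian)
    (γ1 γ2 : ℝ) (hγ1 : 0 < γ1) (hγ2 : 0 < γ2)
    (Ωstar : Matrix (Fin p) (Fin p) ℝ) (hΩstar : Ωstar.PosDef)
    (hmin : ∀ M : Matrix (Fin p) (Fin p) ℝ, M.PosDef →
      genObj S γ1 γ2 Ωstar ≤ genObj S γ1 γ2 M)
    (α : ℝ)
    (hα : α⁻¹ = (maxEig S + γ1 * p + Real.sqrt ((maxEig S + γ1 * p)^2 + 8*γ2)) / 2)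
    (t : ℝ) (ht0 : 0 < t) (ht : t ≤ α^2 / (2*γ2*α^2 + 1))
    (Ω : ℕ → Matrix (Fin p) (Fin p) ℝ)
    (hiter : ∀ k, Ω (k+1) = Sft (Ω k - t • (S - (Ω k)⁻¹ + (2*γ2) • Ω k)) (t*γ1))
    (hlow : ∀ k, loewnerLE (α • (1 : Matrix (Fin p) (Fin p) ℝ)) (Ω k))
    (b' : ℝ) (hb' : b' = specNorm Ωstar + frobNorm (Ω 0 - Ωstar)) :
    ∀ k, loewnerLE (Ω k) (b' • (1 : Matrix (Fin p) (Fin p) ℝ)) := by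
  have hαpos : 0 < α := pos_of_inv_eq_half_add_sqrt hγ2 hα
  have hΩstar_low : loewnerLE (α • 1) Ωstar :=
    smul_one_loewnerLE_of_abs_smoothGrad_le hS hΩstar hγ1.le
      (abs_smoothGrad_apply_le hS hγ1.le hΩstar hmin) (by simpa using hα)
  have hfix := Sft_gradStep_eq_self hS hγ1.le ht0 hΩstar hmin
  have hstep : ∀ k, frobNorm (Ω (k + 1) - Ωstar) ≤ frobNorm (Ω k - Ωstar) := fun k =>
    calc frobNorm (Ω (k + 1) - Ωstar)
        = frobNorm (Sft (gradStep S γ2 t (Ω k)) (t * γ1) -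
            Sft (gradStep S γ2 t Ωstar) (t * γ1)) := by rw [hfix, hiter k]; rfl
      _ ≤ frobNorm (gradStep S γ2 t (Ω k) - gradStep S γ2 t Ωstar) :=
          frobNorm_Sft_sub_Sft_le _ _ (by positivity)
      _ ≤ frobNorm (Ω k - Ωstar) :=
          frobNorm_gradStep_sub_gradStep_le S hαpos hγ2.le ht0.le ht (hlow k) hΩstar_low
  intro k
  rw [hb']
  exact loewnerLE_smul_one_of_frobNorm_sub_le (hlow k).isHermitian
    (antitone_nat_of_succ_le (f := fun k => frobNorm (Ω k - Ωstar)) hstep (Nat.zero_le k))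

/-- given the lower bound αI ⪯ Ω⁽ᵏ⁾ for all k, every GEN-ISTA iterate
  satisfies Ω⁽ᵏ⁾ ⪯ b'I with b' = ‖Ω*‖₂ + ‖Ω⁽⁰⁾ − Ω*‖_F. -/
theorem stmt13 {p : ℕ} (hp : 0 < p)
    (S : Matrix (Fin p) (Fin p) ℝ) (hS : S.IsHermitian)
    (γ1 γ2 : ℝ) (hγ1 : 0 < γ1) (hγ2 : 0 < γ2)
    (Ωstar : Matrix (Fin p) (Fin p) ℝ) (hΩstar : Ωstar.PosDef)
    (hmin : ∀ M : Matrix (Fin p) (Fin p) ℝ, M.PosDef →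
      genObj S γ1 γ2 Ωstar ≤ genObj S γ1 γ2 M)
    (α : ℝ)
    (hα : α⁻¹ = (maxEig S + γ1 * p + Real.sqrt ((maxEig S + γ1 * p)^2 + 8*γ2)) / 2)
    (t : ℝ) (ht0 : 0 < t) (ht : t ≤ α^2 / (2*γ2*α^2 + 1))
    (Ω : ℕ → Matrix (Fin p) (Fin p) ℝ) (h0 : (Ω 0).PosDef)
    (hiter : ∀ k, Ω (k+1) = Sft (Ω k - t • (S - (Ω k)⁻¹ + (2*γ2) • Ω k)) (t*γ1))
    (hlow : ∀ k, loewnerLE (α • (1 : Matrix (Fin p) (Fin p) ℝ)) (Ω k))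
    (b' : ℝ) (hb' : b' = specNorm Ωstar + frobNorm (Ω 0 - Ωstar)) :
    ∀ k, loewnerLE (Ω k) (b' • (1 : Matrix (Fin p) (Fin p) ℝ)) :=
  stmt13_general S hS γ1 γ2 hγ1 hγ2 Ωstar hΩstar hmin α hα t ht0 ht Ω hiter hlow b' hb'
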